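/- Let X and Y be complete separable metric spaces, let P_n be Borel probability measures on X×Y converging weakly to a Borel probability measure P on X×Y, and suppose P_n(X×B) = P(X×B) for every Borel set B ⊆ Y and every n (i.e. all P_n have the same Y-marginal as P). Then for every bounded Borel function η on X×Y such that x ↦ η(x,y) is continuous for each fixed y ∈ Y, one has lim_{n→∞} ∫_{X×Y} η(x,y) P_n(dx dy) = ∫_{X×Y} η(x,y) P(dx dy). -/

import Mathlib

open MeasureTheory Filter Topology Set

noncomputable section

namespace MFG

/-- Points of `ℝ^d`. -/
abbrev Rd (d : ℕ) := Fin d → ℝ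

/-- A curve of measures `t ↦ μ_t` on `ℝ^d`. -/
abbrev Curve (d : ℕ) := ℝ → Measure (Rd d)

/-- Euclidean inner product. -/
def dotp {n : ℕ} (a b : Rd n) : ℝ := ∑ i, a i * b i

/-- Euclidean norm of a vector. -/
def enorm' {n : ℕ} (v : Rd n) : ℝ := Real.sqrt (∑ i, (v i) ^ 2)

/-- Frobenius norm of a matrix. -/
def fnorm {n m : ℕ} (M : Matrix (Fin n) (Fin m) ℝ) : ℝ :=
  Real.sqrt (∑ i, ∑ j, (M i j) ^ 2)

/-- Gradient of a function on `ℝ^d`. -/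
def grad {n : ℕ} (ψ : Rd n → ℝ) (x : Rd n) : Rd n :=
  fun i => fderiv ℝ ψ x (Pi.single i 1)

/-- Hessian matrix of a function on `ℝ^d`. -/
def hess {n : ℕ} (ψ : Rd n → ℝ) (x : Rd n) : Matrix (Fin n) (Fin n) ℝ :=
  Matrix.of fun i j => fderiv ℝ (fun y => fderiv ℝ ψ y (Pi.single j 1)) x (Pi.single i 1)

/-- Test functions: `ψ ∈ C_0^∞(ℝ^d)`. -/
def IsTest {n : ℕ} (ψ : Rd n → ℝ) : Prop := ContDiff ℝ (⊤ : ℕ∞) ψ ∧ HasCompactSupport ψ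

/-- Legendre transform `h*(v) = sup_{p ≥ 0} (p v - h p)`. -/
def legendre (hfun : ℝ → ℝ) (v : ℝ) : ℝ := ⨆ p : Ici (0:ℝ), ((p : ℝ) * v - hfun (p : ℝ))

/-- The inverse function of an increasing function `h : [0,∞) → [0,∞)`. -/
def hinv (hfun : ℝ → ℝ) (y : ℝ) : ℝ := sInf {v : ℝ | 0 ≤ v ∧ y ≤ hfun v}

variable {d d₁ : ℕ}

/-- A family `(μ_t)_{t ∈ [0,T]}` of Borel probability measures, Borel in `t` and
continuous with respect to the weak topology. -/
def IsMeasCurve (T : ℝ) (μ : Curve d) : Prop :=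
  (∀ t ∈ Icc (0:ℝ) T, IsProbabilityMeasure (μ t)) ∧
  (∀ E : Set (Rd d), MeasurableSet E → Measurable fun t => μ t E) ∧
  (∀ φ : Rd d → ℝ, Continuous φ → (∃ K, ∀ x, |φ x| ≤ K) →
      ContinuousOn (fun t => ∫ x, φ x ∂ μ t) (Icc (0:ℝ) T))

/-- The class `M(V)`. -/
def MemMV (T : ℝ) (V : Rd d → ℝ) (μ : Curve d) : Prop :=
  IsMeasCurve T μ ∧ (∀ t ∈ Icc (0:ℝ) T, Integrable V (μ t)) ∧
    ∃ C : ℝ, ∀ t ∈ Icc (0:ℝ) T, ∫ x, V x ∂ μ t ≤ C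

/-- The class `M_{R,M}(V)`. -/
def MemMRM (T : ℝ) (V : Rd d → ℝ) (R M : ℝ) (μ : Curve d) : Prop :=
  MemMV T V μ ∧ ∀ t ∈ Icc (0:ℝ) T, ∫ x, V x ∂ μ t ≤ R * Real.exp (M * t)

/-- `sup_{t ∈ [0,T]} ∫ W dμ_t`. -/
def supInt (T : ℝ) (W : Rd d → ℝ) (μ : Curve d) : ℝ :=
  ⨆ t : Icc (0:ℝ) T, ∫ x, W x ∂ μ (t : ℝ)

/-- `V`-weak convergence of a sequence of curves of measures. -/
def VWeakConv (T : ℝ) (V : Rd d → ℝ) (μn : ℕ → Curve d) (μ : Curve d) : Prop :=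
  ∀ t ∈ Icc (0:ℝ) T, ∀ ζ : Rd d → ℝ, Continuous ζ →
    Tendsto (fun x => ζ x / V x) (cocompact (Rd d)) (𝓝 0) →
    Tendsto (fun n => ∫ x, ζ x ∂ (μn n t)) atTop (𝓝 (∫ x, ζ x ∂ μ t))

/-- Weak convergence of a sequence of bounded measures: convergence of the
integrals of all bounded continuous functions. -/
def WeakLim {α : Type*} [TopologicalSpace α] [MeasurableSpace α]
    (Pn : ℕ → Measure α) (P : Measure α) : Prop :=
  ∀ φ : α → ℝ, Continuous φ → (∃ K, ∀ a, |φ a| ≤ K) →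
    Tendsto (fun n => ∫ a, φ a ∂ (Pn n)) atTop (𝓝 (∫ a, φ a ∂ P))

/-- The measure `μ_t dt` on `ℝ^d × [0,T]` associated with a curve `t ↦ μ_t`. -/
def curveMeasure (T : ℝ) (μ : Curve d) : Measure (Rd d × ℝ) :=
  Measure.bind (volume.restrict (Icc (0:ℝ) T)) (fun t => (μ t).map (fun x => (x, t)))

/-- A family `ω = {ω_ψ}` of moduli of continuity indexed by test functions. -/
def IsModulus (T : ℝ) (Ω : (Rd d → ℝ) → ℝ → ℝ) : Prop :=
  ∀ ψ : Rd d → ℝ, IsTest ψ →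
    ContinuousOn (Ω ψ) (Icc (0:ℝ) T) ∧ MonotoneOn (Ω ψ) (Icc (0:ℝ) T) ∧ Ω ψ 0 = 0

/-- The class `M_{R,M}^ω(V)`. -/
def MemMRMom (T : ℝ) (V : Rd d → ℝ) (R M : ℝ) (Ω : (Rd d → ℝ) → ℝ → ℝ) (μ : Curve d) : Prop :=
  MemMRM T V R M μ ∧ ∀ ψ : Rd d → ℝ, IsTest ψ → ∀ s ∈ Icc (0:ℝ) T, ∀ t ∈ Icc (0:ℝ) T,
    |(∫ x, ψ x ∂ μ t) - ∫ x, ψ x ∂ μ s| ≤ Ω ψ |t - s|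

/-- The coefficients `A(x,t,μ)`, `b(x,t,μ)`, `Q(x,t,μ)` of the mean field game,
given for every curve of measures `μ`. -/
structure Coeffs (d d₁ : ℕ) where
  A : Rd d → ℝ → Curve d → Matrix (Fin d) (Fin d) ℝ
  b : Rd d → ℝ → Curve d → Rd d
  Q : Rd d → ℝ → Curve d → Matrix (Fin d) (Fin d₁) ℝ

/-- The operator `L_μ ψ(x,t) = tr(A(x,t,μ) D²ψ(x)) + ⟨b(x,t,μ), ∇ψ(x)⟩`. -/
def Lop (c : Coeffs d d₁) (σ : Curve d) (ψ : Rd d → ℝ) (x : Rd d) (t : ℝ) : ℝ :=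
  Matrix.trace (c.A x t σ * hess ψ x) + dotp (c.b x t σ) (grad ψ x)

/-- The operator `L_{μ,u} ψ = L_μ ψ + ⟨Q(x,t,μ) u, ∇ψ(x)⟩`. -/
def LopU (c : Coeffs d d₁) (σ : Curve d) (u : Rd d₁) (ψ : Rd d → ℝ) (x : Rd d) (t : ℝ) : ℝ :=
  Lop c σ ψ x t + dotp ((c.Q x t σ).mulVec u) (grad ψ x)

/-- The basic data of the mean field game: the time horizon `T`, the Lyapunov
function `V`, the function `W`, the cost gauge `h` and the control set `U`. -/
structure Setting (d d₁ : ℕ) where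
  T : ℝ
  V : Rd d → ℝ
  W : Rd d → ℝ
  hf : ℝ → ℝ
  U : Set (Rd d₁)
  hT : 0 < T
  hVC2 : ContDiff ℝ 2 V
  hV0 : ∀ x, 0 ≤ V x
  hVinf : Tendsto V (cocompact (Rd d)) atTop
  hWcont : Continuous W
  hW0 : ∀ x, 0 ≤ W x
  hWV : ∀ x, W x ≤ V x
  hWlim : Tendsto (fun x => W x / V x) (cocompact (Rd d)) (𝓝 0)
  hh0 : hf 0 = 0
  hhconv : ConvexOn ℝ (Ici (0:ℝ)) hf
  hhmono : StrictMonoOn hf (Ici (0:ℝ))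
  hhcont : ContinuousOn hf (Ici (0:ℝ))
  hhsuper : Tendsto (fun v => hf v / v) atTop atTop
  hUne : U.Nonempty
  hUclosed : IsClosed U
  hUconv : Convex ℝ U

/-- Condition (H1.1): local boundedness of the coefficients, uniformly over `M_R(V)`. -/
def H11 (S : Setting d d₁) (c : Coeffs d d₁) : Prop :=
  ∀ (x₀ : Rd d) (r : ℝ), ∀ R > (0:ℝ), ∃ K : ℝ,
    ∀ x ∈ Metric.ball x₀ r, ∀ t ∈ Icc (0:ℝ) S.T, ∀ μ : Curve d, MemMRM S.T S.V R 0 μ →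
      (∀ i j, |c.A x t μ i j| ≤ K) ∧ (∀ i, |c.b x t μ i| ≤ K) ∧ (∀ i m, |c.Q x t μ i m| ≤ K)

/-- Condition (H1.2): continuity of the coefficients in `x`. -/
def H12 (S : Setting d d₁) (c : Coeffs d d₁) : Prop :=
  ∀ μ : Curve d, MemMV S.T S.V μ → ∀ t ∈ Icc (0:ℝ) S.T,
    (∀ i j, Continuous fun x => c.A x t μ i j) ∧
    (∀ i, Continuous fun x => c.b x t μ i) ∧
    (∀ i m, Continuous fun x => c.Q x t μ i m)

/-- The coefficients are Borel functions of `(x,t)`. -/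
def HMeasCoeffs (S : Setting d d₁) (c : Coeffs d d₁) : Prop :=
  ∀ μ : Curve d, MemMV S.T S.V μ →
    (∀ i j, Measurable fun p : Rd d × ℝ => c.A p.1 p.2 μ i j) ∧
    (∀ i, Measurable fun p : Rd d × ℝ => c.b p.1 p.2 μ i) ∧
    (∀ i m, Measurable fun p : Rd d × ℝ => c.Q p.1 p.2 μ i m)

/-- Condition (H1.3): uniform-on-balls continuity of the coefficients with respect to
`V`-weak convergence. -/
def H13 (S : Setting d d₁) (c : Coeffs d d₁) : Prop :=
  ∀ (x₀ : Rd d) (r : ℝ), ∀ t ∈ Icc (0:ℝ) S.T, ∀ R > (0:ℝ),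
    ∀ (μn : ℕ → Curve d) (μ : Curve d),
      (∀ n, MemMRM S.T S.V R 0 (μn n)) → MemMRM S.T S.V R 0 μ → VWeakConv S.T S.V μn μ →
      ∀ ε > (0:ℝ), ∃ N : ℕ, ∀ n ≥ N, ∀ x ∈ Metric.ball x₀ r,
        (∀ i j, |c.A x t (μn n) i j - c.A x t μ i j| < ε) ∧
        (∀ i, |c.b x t (μn n) i - c.b x t μ i| < ε) ∧
        (∀ i m, |c.Q x t (μn n) i m - c.Q x t μ i m| < ε)

/-- Condition (H1). -/
def H1 (S : Setting d d₁) (c : Coeffs d d₁) : Prop :=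
  H11 S c ∧ H12 S c ∧ H13 S c ∧ HMeasCoeffs S c

/-- Condition (H2.1): the Lyapunov estimate with constant `C_L`. -/
def H21 (S : Setting d d₁) (c : Coeffs d d₁) (CL : ℝ) : Prop :=
  0 < CL ∧ ∀ μ : Curve d, MemMV S.T S.V μ → ∀ x : Rd d, ∀ t ∈ Icc (0:ℝ) S.T,
    Lop c μ S.V x t + legendre S.hf (enorm' ((c.Q x t μ).transpose.mulVec (grad S.V x)))
      ≤ CL * S.V x + CL * (∫ y, S.V y ∂ μ t) + CL * supInt S.T S.W μ

/-- The positive semidefinite square root of a positive semidefinite matrix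
(the former `Matrix.PosSemidef.sqrt`). -/
def psdSqrt {n : Type*} [Fintype n] [DecidableEq n] {A : Matrix n n ℝ} (hA : A.PosSemidef) :
    Matrix n n ℝ :=
  hA.1.eigenvectorUnitary.1 * Matrix.diagonal ((↑) ∘ Real.sqrt ∘ hA.1.eigenvalues) *
    (star hA.1.eigenvectorUnitary : Matrix n n ℝ)

/-- Conditions (H2.2) and (H2.3): monotonicity/Lipschitz-type bounds and `V`-growth
bounds on `A`, `b`, `Q` and `Θ`. -/
def H2b (S : Setting d d₁) (c : Coeffs d d₁)
    (hApsd : ∀ (x : Rd d) (t : ℝ) (μ : Curve d), (c.A x t μ).PosSemidef) : Prop :=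
  ∀ μ : Curve d, MemMV S.T S.V μ → ∃ C₁ > (0:ℝ), ∃ C₂ > (0:ℝ), ∃ Θ : Rd d → ℝ → ℝ,
    (∀ x t, 0 ≤ Θ x t) ∧ (Measurable fun p : Rd d × ℝ => Θ p.1 p.2) ∧
    (∀ x y : Rd d, ∀ t ∈ Icc (0:ℝ) S.T,
      Matrix.trace ((psdSqrt (hApsd x t μ) - psdSqrt (hApsd y t μ)) *
          (psdSqrt (hApsd x t μ) - psdSqrt (hApsd y t μ))) + dotp (c.b x t μ - c.b y t μ) (x - y)
        ≤ C₁ * (1 + S.V x + S.V y) * (enorm' (x - y)) ^ 2) ∧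
    (∀ x y : Rd d, ∀ t ∈ Icc (0:ℝ) S.T,
      fnorm (c.Q x t μ - c.Q y t μ) ≤ (Θ x t + Θ y t) * enorm' (x - y)) ∧
    (∀ x : Rd d, ∀ t ∈ Icc (0:ℝ) S.T,
      fnorm (c.A x t μ) + enorm' (c.b x t μ) + legendre S.hf (fnorm (c.Q x t μ)) +
          legendre S.hf (Θ x t) ≤ C₂ * S.V x)

/-- Condition (H3.1): continuity and growth of `g`, with constant `C_g`. -/
def H31 (S : Setting d d₁) (g : Rd d → Curve d → ℝ) (Cg : ℝ) : Prop :=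
  0 < Cg ∧ ∀ μ : Curve d, MemMV S.T S.V μ →
    (Continuous fun x => g x μ) ∧ ∀ x, |g x μ| ≤ Cg * (S.W x + supInt S.T S.W μ)

/-- Condition (H3.2): two-sided growth bound on `f`, with constants `C_h > 1`, `C_f > 0`. -/
def H32 (S : Setting d d₁) (f : Rd d₁ → Rd d → ℝ → Curve d → ℝ) (Ch Cf : ℝ) : Prop :=
  1 < Ch ∧ 0 < Cf ∧ ∀ μ : Curve d, MemMV S.T S.V μ → ∀ (u : Rd d₁) (x : Rd d),
    ∀ t ∈ Icc (0:ℝ) S.T,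
      S.hf (enorm' u) - Cf * (S.W x + supInt S.T S.W μ) ≤ f u x t μ ∧
      f u x t μ ≤ Ch * S.hf (enorm' u) + Cf * (S.W x + supInt S.T S.W μ)

/-- Condition (H3.3): stability of `f` and `g` under `V`-weak convergence, uniformly on balls. -/
def H33 (S : Setting d d₁) (f : Rd d₁ → Rd d → ℝ → Curve d → ℝ) (g : Rd d → Curve d → ℝ) :
    Prop :=
  ∀ (x₀ : Rd d) (r : ℝ) (u₀ : Rd d₁) (r₁ : ℝ), ∀ R > (0:ℝ), ∀ M ≥ (0:ℝ),
    ∀ (μn : ℕ → Curve d) (μ : Curve d),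
      (∀ n, MemMRM S.T S.V R M (μn n)) → MemMRM S.T S.V R M μ → VWeakConv S.T S.V μn μ →
      (∀ ε > (0:ℝ), ∃ N : ℕ, ∀ n ≥ N, ∀ x ∈ Metric.ball x₀ r, |g x (μn n) - g x μ| < ε) ∧
      (∀ t ∈ Icc (0:ℝ) S.T, ∀ ε > (0:ℝ), ∃ N : ℕ, ∀ n ≥ N, ∀ x ∈ Metric.ball x₀ r,
        ∀ u ∈ Metric.ball u₀ r₁ ∩ S.U, |f u x t (μn n) - f u x t μ| < ε)

/-- Condition (H3.4): convexity of `f` in `u` and joint continuity in `(u,x)`. -/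
def H34 (S : Setting d d₁) (f : Rd d₁ → Rd d → ℝ → Curve d → ℝ) : Prop :=
  ∀ μ : Curve d, MemMV S.T S.V μ → ∀ t ∈ Icc (0:ℝ) S.T,
    (∀ x : Rd d, ConvexOn ℝ S.U fun u => f u x t μ) ∧
    ContinuousOn (fun p : Rd d₁ × Rd d => f p.1 p.2 t μ) (S.U ×ˢ (univ : Set (Rd d)))

/-- `f` and `g` are Borel functions. -/
def HMeasfg (S : Setting d d₁) (f : Rd d₁ → Rd d → ℝ → Curve d → ℝ)
    (g : Rd d → Curve d → ℝ) : Prop :=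
  ∀ μ : Curve d, MemMV S.T S.V μ →
    (Measurable fun p : Rd d₁ × Rd d × ℝ => f p.1 p.2.1 p.2.2 μ) ∧ (Measurable fun x => g x μ)

/-- Condition (H3). -/
def H3 (S : Setting d d₁) (f : Rd d₁ → Rd d → ℝ → Curve d → ℝ) (g : Rd d → Curve d → ℝ)
    (Ch Cf Cg : ℝ) : Prop :=
  H31 S g Cg ∧ H32 S f Ch Cf ∧ H33 S f g ∧ H34 S f ∧ HMeasfg S f g

/-- `μ = μ_t dt` is a probability solution of the Cauchy problem
`∂_t μ_t = L*_{σ,u(x,t)} μ_t`, `μ_0 = ν`. -/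
def SolvesFPK (S : Setting d d₁) (c : Coeffs d d₁) (σ : Curve d)
    (u : Rd d → ℝ → Rd d₁) (ν : Measure (Rd d)) (μ : Curve d) : Prop :=
  IsMeasCurve S.T μ ∧ μ 0 = ν ∧
  ∀ ψ : Rd d → ℝ, IsTest ψ → ∀ t ∈ Icc (0:ℝ) S.T,
    (∀ s ∈ Icc (0:ℝ) S.T, Integrable (fun x => LopU c σ (u x s) ψ x s) (μ s)) ∧
    IntervalIntegrable (fun s => ∫ x, LopU c σ (u x s) ψ x s ∂ μ s) volume 0 t ∧
    (∫ x, ψ x ∂ μ t) - (∫ x, ψ x ∂ ν) = ∫ s in (0:ℝ)..t, ∫ x, LopU c σ (u x s) ψ x s ∂ μ s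

/-- The space `U × ℝ^d × [0,T]` on which the relaxed controls live. -/
abbrev PSpace (d d₁ : ℕ) := Rd d₁ × Rd d × ℝ

/-- The class `P_R` (with `M = 5 C_L` and `γ = e^{-C_L T}/4`). -/
def MemPR (S : Setting d d₁) (CL R : ℝ) (P : Measure (PSpace d d₁)) : Prop :=
  P univ = ENNReal.ofReal S.T ∧
  P {p : PSpace d d₁ | ¬(p.1 ∈ S.U ∧ p.2.2 ∈ Icc (0:ℝ) S.T)} = 0 ∧
  (∀ t ∈ Icc (0:ℝ) S.T,
    (∫⁻ p in {p : PSpace d d₁ | p.2.2 ≤ t}, ENNReal.ofReal (S.V p.2.1) ∂P)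
      ≤ ENNReal.ofReal (R * Real.exp (5 * CL * t))) ∧
  (∫⁻ p, ENNReal.ofReal (S.hf (enorm' p.1)) ∂P) ≤
    ENNReal.ofReal (Real.exp (-(CL * S.T)) / 4 * R)

/-- `P ∈ S_R(σ)` with the explicit curve `μ = μ_t dt` as its `(x,t)`-projection. -/
def MemSRwith (S : Setting d d₁) (c : Coeffs d d₁) (CL : ℝ) (ν : Measure (Rd d)) (R : ℝ)
    (σ : Curve d) (P : Measure (PSpace d d₁)) (μ : Curve d) : Prop :=
  MemPR S CL R P ∧ IsMeasCurve S.T μ ∧ μ 0 = ν ∧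
  P.map (fun p : PSpace d d₁ => (p.2.1, p.2.2)) = curveMeasure S.T μ ∧
  ∀ ψ : Rd d → ℝ, IsTest ψ → ∀ t ∈ Icc (0:ℝ) S.T,
    Integrable (fun p : PSpace d d₁ => LopU c σ p.1 ψ p.2.1 p.2.2)
      (P.restrict {p : PSpace d d₁ | p.2.2 ≤ t}) ∧
    (∫ x, ψ x ∂ μ t) = (∫ x, ψ x ∂ ν) +
      ∫ p in {p : PSpace d d₁ | p.2.2 ≤ t}, LopU c σ p.1 ψ p.2.1 p.2.2 ∂P

/-- The class `S_R(σ)`. -/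
def MemSR (S : Setting d d₁) (c : Coeffs d d₁) (CL : ℝ) (ν : Measure (Rd d)) (R : ℝ)
    (σ : Curve d) (P : Measure (PSpace d d₁)) : Prop :=
  ∃ μ : Curve d, MemSRwith S c CL ν R σ P μ

/-- The measure `δ_{u(x,t)}(du) μ_t(dx) dt` on `U × ℝ^d × [0,T]`. -/
def diracCtrl (S : Setting d d₁) (u : Rd d → ℝ → Rd d₁) (μ : Curve d) :
    Measure (PSpace d d₁) :=
  (curveMeasure S.T μ).map (fun q : Rd d × ℝ => (u q.1 q.2, q.1, q.2))

/-- The cost functional `F_θ(Γ) = ∫ f(u,x,t,θ) dΓ + ∫ g(x,θ) dη_T`, where `η_t dt`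
is the `(x,t)`-projection of `Γ`, given by the curve `η`. -/
def Ffun (S : Setting d d₁) (f : Rd d₁ → Rd d → ℝ → Curve d → ℝ) (g : Rd d → Curve d → ℝ)
    (θ : Curve d) (P : Measure (PSpace d d₁)) (η : Curve d) : ℝ :=
  (∫ p : PSpace d d₁, f p.1 p.2.1 p.2.2 θ ∂P) + ∫ x, g x θ ∂ η S.T


open scoped ENNReal NNReal

lemma compl_le_of_lt {α : Type*} [MeasurableSpace α] {μ : Measure α} [IsProbabilityMeasure μ]
    {S : Set α} (hS : MeasurableSet S) {δ : ℝ≥0∞} (h : 1 - δ < μ S) : μ Sᶜ ≤ δ := by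
  rw [prob_compl_eq_one_sub hS]
  exact tsub_le_iff_right.mpr (tsub_le_iff_left.mp h.le)

lemma eventually_gt_of_tendsto_one {ι : Type*} {l : Filter ι} {g : ι → ℝ≥0∞}
    (h : Tendsto g l (𝓝 1)) {δ : ℝ≥0∞} (hδ : 0 < δ) : ∀ᶠ i in l, 1 - δ < g i :=
  h.eventually (eventually_gt_nhds (ENNReal.sub_lt_self ENNReal.one_ne_top one_ne_zero hδ.ne'))

lemma aux_tight {Z : Type*} [MetricSpace Z] [CompleteSpace Z]
    [TopologicalSpace.SeparableSpace Z]
    [MeasurableSpace Z] [OpensMeasurableSpace Z] [HasOuterApproxClosed Z]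
    (Qs : ℕ → ProbabilityMeasure Z) (Q : ProbabilityMeasure Z)
    (h : Tendsto Qs atTop (𝓝 Q)) {ε : ℝ≥0∞} (hε : 0 < ε) :
    ∃ K : Set Z, IsCompact K ∧ (∀ n, (Qs n : Measure Z) Kᶜ ≤ ε) ∧ (Q : Measure Z) Kᶜ ≤ ε := by
  haveI : Nonempty Z := Q.nonempty
  set d := TopologicalSpace.denseSeq Z with hd_def
  have hd : DenseRange d := TopologicalSpace.denseRange_denseSeq Z
  set V : ℕ → ℕ → Set Z := fun m N => ⋃ i ∈ Finset.range N, Metric.ball (d i) (1/(m+1)) with hV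
  have hVopen : ∀ m N, IsOpen (V m N) := fun m N => isOpen_biUnion (fun i _ => Metric.isOpen_ball)
  have hVmono : ∀ m, Monotone (V m) := by
    intro m N N' hNN'
    intro x hx
    rw [mem_iUnion₂] at hx ⊢
    obtain ⟨i, hi, hxi⟩ := hx
    exact ⟨i, Finset.mem_range.mpr (lt_of_lt_of_le (Finset.mem_range.mp hi) hNN'), hxi⟩
  have hVunion : ∀ m, (⋃ N, V m N) = univ := by
    intro m
    apply eq_univ_of_forall
    intro x
    obtain ⟨i, hi⟩ := hd.exists_dist_lt x (show (0:ℝ) < 1/(m+1) by positivity)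
    exact mem_iUnion.mpr ⟨i+1, Set.mem_biUnion (Finset.self_mem_range_succ i)
      (by simpa [Metric.mem_ball, dist_comm] using hi)⟩
  have key : ∀ (R : ProbabilityMeasure Z) (m : ℕ) (δ : ℝ≥0∞), 0 < δ →
      ∀ᶠ N in atTop, 1 - δ < (R : Measure Z) (V m N) := by
    intro R m δ hδ
    have h1 : Tendsto (fun N => (R : Measure Z) (V m N)) atTop (𝓝 1) := by
      have h2 := tendsto_measure_iUnion_atTop (μ := (R : Measure Z)) (hVmono m)
      rw [hVunion m] at h2
      simpa [Function.comp_def] using h2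
    exact eventually_gt_of_tendsto_one h1 hδ
  have claim : ∀ (m : ℕ) (δ : ℝ≥0∞), 0 < δ → ∃ N,
      (∀ n, (Qs n : Measure Z) ((V m N)ᶜ) ≤ δ) ∧ (Q : Measure Z) ((V m N)ᶜ) ≤ δ := by
    intro m δ hδ
    obtain ⟨N₀, hN₀⟩ := (key Q m δ hδ).exists
    have hlim : (1:ℝ≥0∞) - δ < atTop.liminf (fun n => (Qs n : Measure Z) (V m N₀)) :=
      lt_of_lt_of_le hN₀ (ProbabilityMeasure.le_liminf_measure_open_of_tendsto h (hVopen m N₀))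
    obtain ⟨n₁, hn₁⟩ := eventually_atTop.mp (eventually_lt_of_lt_liminf hlim)
    have hsmall : ∀ n, ∃ Nn, 1 - δ < (Qs n : Measure Z) (V m Nn) :=
      fun n => ((key (Qs n) m δ hδ).exists)
    choose Nf hNf using hsmall
    refine ⟨max N₀ ((Finset.range n₁).sup Nf), fun n => ?_, ?_⟩
    · rcases le_or_gt n₁ n with hn | hn
      · refine compl_le_of_lt ((hVopen _ _).measurableSet) (lt_of_lt_of_le (hn₁ n hn) ?_)
        exact measure_mono (hVmono m (le_max_left _ _))
      · refine compl_le_of_lt ((hVopen _ _).measurableSet) (lt_of_lt_of_le (hNf n) ?_)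
        refine measure_mono (hVmono m (le_trans ?_ (le_max_right _ _)))
        exact Finset.le_sup (Finset.mem_range.mpr hn)
    · exact compl_le_of_lt ((hVopen _ _).measurableSet)
        (lt_of_lt_of_le hN₀ (measure_mono (hVmono m (le_max_left _ _))))
  have hgeom : ∀ m : ℕ, (0:ℝ≥0∞) < ε / 2^(m+1) := by
    intro m
    exact ENNReal.div_pos hε.ne' (by simp)
  choose N hN1 hN2 using fun m => claim m (ε / 2^(m+1)) (hgeom m)
  have htsum : (∑' m : ℕ, ε / 2^(m+1)) = ε := by
    have h1 : ∀ m : ℕ, ε / 2^(m+1) = ε * (2⁻¹ : ℝ≥0∞)^m * 2⁻¹ := by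
      intro m
      rw [div_eq_mul_inv, ← ENNReal.inv_pow, pow_succ, ENNReal.mul_inv (by simp) (by simp)]
      ring
    simp_rw [h1]
    rw [ENNReal.tsum_mul_right, ENNReal.tsum_mul_left, ENNReal.tsum_geometric,
      ENNReal.one_sub_inv_two, inv_inv, mul_assoc,
      ENNReal.mul_inv_cancel two_ne_zero ENNReal.ofNat_ne_top, mul_one]
  have hKcompl : (⋂ m, closure (V m (N m)))ᶜ = ⋃ m, (closure (V m (N m)))ᶜ := by
    simp [compl_iInter]
  have hbound : ∀ (R : ProbabilityMeasure Z),
      (∀ m, (R : Measure Z) ((V m (N m))ᶜ) ≤ ε / 2^(m+1)) →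
      (R : Measure Z) ((⋂ m, closure (V m (N m)))ᶜ) ≤ ε := by
    intro R hR
    rw [hKcompl]
    refine le_trans (measure_iUnion_le _) (le_trans (ENNReal.tsum_le_tsum (fun m => ?_)) htsum.le)
    exact le_trans (measure_mono (compl_subset_compl.mpr subset_closure)) (hR m)
  refine ⟨⋂ m, closure (V m (N m)), ?_, fun n => hbound (Qs n) (fun m => hN1 m n),
    hbound Q (fun m => hN2 m)⟩
  apply TotallyBounded.isCompact_of_isClosed
  · rw [Metric.totallyBounded_iff]
    intro r hr
    obtain ⟨m, hm⟩ : ∃ m : ℕ, 1/((m:ℝ)+1) < r := exists_nat_one_div_lt hr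
    refine ⟨d '' (Finset.range (N m)), (Finset.range (N m)).finite_toSet.image d, ?_⟩
    have hsub1 : closure (V m (N m)) ⊆ ⋃ i ∈ Finset.range (N m), Metric.closedBall (d i) (1/(m+1)) := by
      apply closure_minimal
      · exact Set.iUnion₂_mono (fun i _ => Metric.ball_subset_closedBall)
      · exact Set.Finite.isClosed_biUnion (Finset.range (N m)).finite_toSet
          (fun i _ => Metric.isClosed_closedBall)
    refine le_trans (iInter_subset _ m) (le_trans hsub1 ?_)
    simp only [Set.biUnion_image, Finset.mem_coe]
    exact Set.iUnion₂_mono (fun i _ => Metric.closedBall_subset_ball hm)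
  · exact isClosed_iInter (fun m => isClosed_closure)


lemma int_of_bdd {α : Type*} [MeasurableSpace α] (μ : Measure α) [IsFiniteMeasure μ]
    {φ : α → ℝ} (hm : AEStronglyMeasurable φ μ) {C : ℝ} (h : ∀ a, |φ a| ≤ C) :
    Integrable φ μ :=
  (integrable_const C).mono' hm (ae_of_all _ (by simpa [Real.norm_eq_abs] using h))

lemma aux_prod {X Y : Type*} [TopologicalSpace X] [MeasurableSpace X] [OpensMeasurableSpace X]
    [MetricSpace Y] [MeasurableSpace Y] [BorelSpace Y]
    (Pn : ℕ → Measure (X × Y)) (P : Measure (X × Y))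
    (hPn : ∀ n, IsProbabilityMeasure (Pn n)) (hP : IsProbabilityMeasure P)
    (hconv : ∀ φ : X × Y → ℝ, Continuous φ → (∃ K, ∀ a, |φ a| ≤ K) →
      Tendsto (fun n => ∫ a, φ a ∂ Pn n) atTop (𝓝 (∫ a, φ a ∂ P)))
    (hmargmeas : ∀ n, (Pn n).map Prod.snd = P.map Prod.snd)
    (f : X → ℝ) (hf : Continuous f) (Cf : ℝ) (hCf : 0 ≤ Cf) (hfb : ∀ x, |f x| ≤ Cf)
    (B : Set Y) (hB : MeasurableSet B) :
    Tendsto (fun n => ∫ p : X × Y, B.indicator (fun _ => (1:ℝ)) p.2 * f p.1 ∂ Pn n) atTop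
      (𝓝 (∫ p : X × Y, B.indicator (fun _ => (1:ℝ)) p.2 * f p.1 ∂ P)) := by
  haveI := hP
  haveI := hPn
  set ν : Measure Y := P.map Prod.snd with hν
  haveI : IsProbabilityMeasure ν := Measure.isProbabilityMeasure_map measurable_snd.aemeasurable
  rw [Metric.tendsto_atTop]
  intro ε hε
  set δ : ℝ≥0∞ := ENNReal.ofReal (ε / (8 * (Cf + 1))) with hδ
  have hδ0 : δ ≠ 0 := by
    simp only [hδ, ne_eq, ENNReal.ofReal_eq_zero, not_le]
    positivity
  -- approximate the indicator in L¹(ν) by a continuous function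
  obtain ⟨F, hFB, hFclosed, hFdiff⟩ := hB.exists_isClosed_diff_lt (measure_ne_top ν B) hδ0
  obtain ⟨U, hBU, hUopen, hUdiff⟩ := hB.exists_isOpen_diff_lt (measure_ne_top ν B) hδ0
  obtain ⟨g, hg0, hg1, hg01⟩ := exists_continuous_zero_one_of_isClosed
    (isClosed_compl_iff.mpr hUopen) hFclosed
    (disjoint_compl_left_iff.mpr (hFB.trans hBU))
  -- pointwise bound
  have hpt : ∀ y : Y, |B.indicator (fun _ => (1:ℝ)) y - g y| ≤ (U \ F).indicator (fun _ => (1:ℝ)) y := by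
    intro y
    by_cases hyF : y ∈ F
    · have hg : g y = 1 := hg1 hyF
      rw [indicator_of_mem (hFB hyF), hg]
      simpa using Set.indicator_nonneg (fun _ _ => zero_le_one) y
    · by_cases hyU : y ∈ U
      · have h0 : 0 ≤ B.indicator (fun _ => (1:ℝ)) y := Set.indicator_nonneg (fun _ _ => zero_le_one) y
        have h1 : B.indicator (fun _ => (1:ℝ)) y ≤ 1 := by
          by_cases hyB : y ∈ B <;> simp [hyB]
        have h2 : 0 ≤ g y := (hg01 y).1
        have h3 : g y ≤ 1 := (hg01 y).2
        rw [indicator_of_mem (Set.mem_diff_of_mem hyU hyF), abs_le]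
        constructor <;> linarith
      · have hgy : g y = 0 := hg0 hyU
        have hyB : y ∉ B := fun hyB => hyU (hBU hyB)
        rw [indicator_of_notMem hyB, hgy, sub_zero, abs_zero]
        exact Set.indicator_nonneg (fun _ _ => zero_le_one) y
  -- the L¹ error over the marginal
  have hUFmeas : MeasurableSet (U \ F) := hUopen.measurableSet.diff hFclosed.measurableSet
  have hUF : ν (U \ F) ≤ 2 * δ := by
    have : U \ F ⊆ (U \ B) ∪ (B \ F) := by
      intro y hy
      by_cases hyB : y ∈ B
      · exact Or.inr ⟨hyB, hy.2⟩
      · exact Or.inl ⟨hy.1, hyB⟩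
    calc ν (U \ F) ≤ ν ((U \ B) ∪ (B \ F)) := measure_mono this
      _ ≤ ν (U \ B) + ν (B \ F) := measure_union_le _ _
      _ ≤ δ + δ := add_le_add hUdiff.2.le hFdiff.le
      _ = 2 * δ := (two_mul δ).symm
  have herr : ∀ (Q : Measure (X × Y)), IsProbabilityMeasure Q → Q.map Prod.snd = ν →
      |(∫ p : X × Y, B.indicator (fun _ => (1:ℝ)) p.2 * f p.1 ∂ Q) -
        ∫ p : X × Y, g p.2 * f p.1 ∂ Q| ≤ ε / 4 := by
    intro Q hQ hQmap
    haveI := hQ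
    have hmeas_ind : Measurable (B.indicator (fun _ => (1:ℝ))) :=
      measurable_const.indicator hB
    have hmeas1 : AEStronglyMeasurable (fun p : X × Y => B.indicator (fun _ => (1:ℝ)) p.2 * f p.1) Q :=
      ((hmeas_ind.comp measurable_snd).aestronglyMeasurable.mul
        ((hf.measurable.comp measurable_fst).aestronglyMeasurable))
    have hmeas2 : AEStronglyMeasurable (fun p : X × Y => g p.2 * f p.1) Q :=
      ((g.continuous.measurable.comp measurable_snd).aestronglyMeasurable.mul
        ((hf.measurable.comp measurable_fst).aestronglyMeasurable))
    have hint1 : Integrable (fun p : X × Y => B.indicator (fun _ => (1:ℝ)) p.2 * f p.1) Q := by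
      refine int_of_bdd Q hmeas1 (C := Cf) (fun p => ?_)
      rw [abs_mul]
      have : |B.indicator (fun _ => (1:ℝ)) p.2| ≤ 1 := by
        by_cases h : p.2 ∈ B <;> simp [h]
      calc |B.indicator (fun _ => (1:ℝ)) p.2| * |f p.1| ≤ 1 * Cf :=
          mul_le_mul this (hfb p.1) (abs_nonneg _) zero_le_one
        _ = Cf := one_mul Cf
    have hint2 : Integrable (fun p : X × Y => g p.2 * f p.1) Q := by
      refine int_of_bdd Q hmeas2 (C := Cf) (fun p => ?_)
      rw [abs_mul]
      have h1 : |g p.2| ≤ 1 := abs_le.mpr ⟨by linarith [(hg01 p.2).1], (hg01 p.2).2⟩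
      calc |g p.2| * |f p.1| ≤ 1 * Cf := mul_le_mul h1 (hfb p.1) (abs_nonneg _) zero_le_one
        _ = Cf := one_mul Cf
    rw [← integral_sub hint1 hint2]
    rw [← Real.norm_eq_abs]
    refine le_trans (norm_integral_le_integral_norm _) ?_
    simp_rw [Real.norm_eq_abs]
    have hptQ : ∀ p : X × Y,
        |B.indicator (fun _ => (1:ℝ)) p.2 * f p.1 - g p.2 * f p.1| ≤
          (U \ F).indicator (fun _ => (Cf:ℝ)) p.2 := by
      intro p
      rw [← sub_mul, abs_mul]
      by_cases hp : p.2 ∈ U \ F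
      · rw [indicator_of_mem hp]
        have hb : |B.indicator (fun _ => (1:ℝ)) p.2 - g p.2| ≤ 1 := by
          have := hpt p.2
          rwa [indicator_of_mem hp] at this
        simpa using mul_le_mul hb (hfb p.1) (abs_nonneg _) zero_le_one
      · rw [indicator_of_notMem hp]
        have := hpt p.2
        rw [indicator_of_notMem hp] at this
        have h0 : |B.indicator (fun _ => (1:ℝ)) p.2 - g p.2| = 0 := le_antisymm this (abs_nonneg _)
        rw [h0, zero_mul]
    have hintind : Integrable (fun p : X × Y => (U \ F).indicator (fun _ => (Cf:ℝ)) p.2) Q := by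
      refine int_of_bdd Q ?_ (C := |Cf|) (fun p => ?_)
      · exact ((measurable_const.indicator hUFmeas).comp measurable_snd).aestronglyMeasurable
      · by_cases h : p.2 ∈ U \ F <;> simp [h, le_abs_self, abs_nonneg]
    calc (∫ p : X × Y, |B.indicator (fun _ => (1:ℝ)) p.2 * f p.1 - g p.2 * f p.1| ∂ Q)
        ≤ ∫ p : X × Y, (U \ F).indicator (fun _ => (Cf:ℝ)) p.2 ∂ Q :=
          integral_mono (hint1.sub hint2).abs hintind hptQ
      _ = ∫ y : Y, (U \ F).indicator (fun _ => (Cf:ℝ)) y ∂ (Q.map Prod.snd) := by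
          rw [integral_map measurable_snd.aemeasurable
            (measurable_const.indicator hUFmeas).aestronglyMeasurable]
      _ = (ν (U \ F)).toReal * Cf := by
          rw [hQmap, integral_indicator_const _ hUFmeas, smul_eq_mul]; rfl
      _ ≤ ε / 4 := by
          have h2δ : (ν (U \ F)).toReal ≤ 2 * (ε / (8 * (Cf + 1))) := by
            refine ENNReal.toReal_le_of_le_ofReal (by positivity) ?_
            rw [ENNReal.ofReal_mul (by norm_num : (0:ℝ) ≤ 2)]
            simpa [hδ, ENNReal.ofReal_ofNat] using hUF
          have hν0 : 0 ≤ (ν (U \ F)).toReal := ENNReal.toReal_nonneg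
          calc (ν (U \ F)).toReal * Cf ≤ (2 * (ε / (8 * (Cf + 1)))) * Cf := by
                exact mul_le_mul_of_nonneg_right h2δ hCf
            _ ≤ ε / 4 := by
                have h8 : (0:ℝ) < 8 * (Cf + 1) := by positivity
                have heq : 2 * (ε / (8 * (Cf + 1))) * Cf = ε * (2 * Cf) / (8 * (Cf + 1)) := by
                  field_simp
                rw [heq, div_le_div_iff₀ h8 (by norm_num : (0:ℝ) < 4)]
                nlinarith [hε.le, hCf]
  -- conclusion
  have hcont : Continuous (fun p : X × Y => g p.2 * f p.1) :=
    (g.continuous.comp continuous_snd).mul (hf.comp continuous_fst)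
  have hbd : ∃ K, ∀ p : X × Y, |g p.2 * f p.1| ≤ K := by
    refine ⟨Cf, fun p => ?_⟩
    rw [abs_mul]
    have h1 : |g p.2| ≤ 1 := abs_le.mpr ⟨by linarith [(hg01 p.2).1], (hg01 p.2).2⟩
    calc |g p.2| * |f p.1| ≤ 1 * Cf := mul_le_mul h1 (hfb p.1) (abs_nonneg _) zero_le_one
      _ = Cf := one_mul Cf
  have hmidT := hconv _ hcont hbd
  rw [Metric.tendsto_atTop] at hmidT
  obtain ⟨N, hN⟩ := hmidT (ε / 4) (by positivity)
  refine ⟨N, fun n hn => ?_⟩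
  have h1 := herr (Pn n) (hPn n) (hmargmeas n)
  have h2 := herr P hP rfl
  have h3 := hN n hn
  rw [Real.dist_eq] at h3 ⊢
  set a := ∫ p : X × Y, B.indicator (fun _ => (1:ℝ)) p.2 * f p.1 ∂ Pn n
  set b := ∫ p : X × Y, g p.2 * f p.1 ∂ Pn n
  set c := ∫ p : X × Y, g p.2 * f p.1 ∂ P
  set e := ∫ p : X × Y, B.indicator (fun _ => (1:ℝ)) p.2 * f p.1 ∂ P
  have t1 : |a - e| ≤ |a - b| + |b - e| := abs_sub_le a b e
  have t2 : |b - e| ≤ |b - c| + |c - e| := abs_sub_le b c e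
  have t3 : |c - e| = |e - c| := abs_sub_comm c e
  linarith


/-- Remark 3.6: let `X`, `Y` be complete separable metric spaces and let `P_n` be Borel
probability measures on `X × Y` converging weakly to `P`, all with the same `Y`-marginal
as `P`. Then for every bounded Borel function `η` on `X × Y` that is continuous in `x` for
every fixed `y`, the integrals `∫ η dP_n` converge to `∫ η dP`. -/
theorem weak_conv_partially_continuous_test
    {X Y : Type*} [MetricSpace X] [CompleteSpace X] [TopologicalSpace.SeparableSpace X]
    [MeasurableSpace X] [BorelSpace X]
    [MetricSpace Y] [CompleteSpace Y] [TopologicalSpace.SeparableSpace Y]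
    [MeasurableSpace Y] [BorelSpace Y]
    (Pn : ℕ → Measure (X × Y)) (P : Measure (X × Y))
    (hPn : ∀ n, IsProbabilityMeasure (Pn n)) (hP : IsProbabilityMeasure P)
    (hconv : ∀ φ : X × Y → ℝ, Continuous φ → (∃ K, ∀ a, |φ a| ≤ K) →
      Tendsto (fun n => ∫ a, φ a ∂ Pn n) atTop (𝓝 (∫ a, φ a ∂ P)))
    (hmarg : ∀ B : Set Y, MeasurableSet B → ∀ n,
      Pn n ((univ : Set X) ×ˢ B) = P ((univ : Set X) ×ˢ B))
    (η : X × Y → ℝ) (hηmeas : Measurable η) (K : ℝ) (hηbd : ∀ a, |η a| ≤ K)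
    (hηcont : ∀ y : Y, Continuous fun x : X => η (x, y)) :
    Tendsto (fun n => ∫ a, η a ∂ Pn n) atTop (𝓝 (∫ a, η a ∂ P)) := by
  classical
  haveI : SecondCountableTopology X := UniformSpace.secondCountable_of_separable X
  haveI : SecondCountableTopology Y := UniformSpace.secondCountable_of_separable Y
  haveI := hP
  have hne : Nonempty (X × Y) :=
    MeasureTheory.ProbabilityMeasure.nonempty (⟨P, hP⟩ : ProbabilityMeasure (X × Y))
  have hneY : Nonempty Y := ⟨hne.some.2⟩
  have hK0 : 0 ≤ K := (abs_nonneg _).trans (hηbd hne.some)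
  -- equal marginals as measures
  have hmargmeas : ∀ n, (Pn n).map Prod.snd = P.map Prod.snd := by
    intro n
    ext B hB
    rw [Measure.map_apply measurable_snd hB, Measure.map_apply measurable_snd hB]
    have hpre : Prod.snd ⁻¹' B = (univ : Set X) ×ˢ B := by ext p; simp
    rw [hpre]
    exact hmarg B hB n
  set ν : Measure Y := P.map Prod.snd with hν
  haveI : IsProbabilityMeasure ν := Measure.isProbabilityMeasure_map measurable_snd.aemeasurable
  -- weak convergence of probability measures
  set P' : ProbabilityMeasure (X × Y) := ⟨P, hP⟩ with hP'def
  set Pn' : ℕ → ProbabilityMeasure (X × Y) := fun n => ⟨Pn n, hPn n⟩ with hPn'def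
  have hconv' : Tendsto Pn' atTop (𝓝 P') := by
    rw [MeasureTheory.ProbabilityMeasure.tendsto_iff_forall_integral_tendsto]
    intro f
    exact hconv f f.continuous ⟨‖f‖, fun a => by
      rw [← Real.norm_eq_abs]; exact f.norm_coe_le_norm a⟩
  rw [Metric.tendsto_atTop]
  intro ε hε
  set ε' : ℝ := ε / 16 with hε'def
  have hε'pos : 0 < ε' := by positivity
  set δ : ℝ := min (ε / (32 * (K + 1))) (1/2) with hδdef
  have hδpos : 0 < δ := lt_min (by positivity) (by norm_num)
  have hδhalf : δ ≤ 1/2 := min_le_right _ _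
  have hδε : (K + 1) * δ ≤ ε / 32 := by
    have h1 : δ ≤ ε / (32 * (K + 1)) := min_le_left _ _
    have h2 : (0:ℝ) < K + 1 := by positivity
    rw [le_div_iff₀ (by norm_num : (0:ℝ) < 32)]
    calc (K + 1) * δ * 32 ≤ (K + 1) * (ε / (32 * (K + 1))) * 32 := by nlinarith
      _ = ε := by field_simp
  -- tightness
  obtain ⟨K0, hK0comp, hK0n, hK0P⟩ := aux_tight Pn' P' hconv'
    (ε := ENNReal.ofReal δ) (ENNReal.ofReal_pos.mpr hδpos)
  set Kc : Set X := Prod.fst '' K0 with hKcdef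
  have hKccomp : IsCompact Kc := hK0comp.image continuous_fst
  have hKcclosed : IsClosed Kc := hKccomp.isClosed
  have hsubK : (Kcᶜ ×ˢ (univ : Set Y)) ⊆ K0ᶜ := by
    rintro ⟨x, y⟩ hp hpK0
    exact hp.1 ⟨(x, y), hpK0, rfl⟩
  have hKn : ∀ n, Pn n (Kcᶜ ×ˢ (univ : Set Y)) ≤ ENNReal.ofReal δ :=
    fun n => le_trans (measure_mono hsubK) (hK0n n)
  have hKP : P (Kcᶜ ×ˢ (univ : Set Y)) ≤ ENNReal.ofReal δ :=
    le_trans (measure_mono hsubK) hK0P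
  -- Kc is nonempty
  have hKcne : Kc.Nonempty := by
    rcases Kc.eq_empty_or_nonempty with h | h
    · exfalso
      have h1 : (Kcᶜ ×ˢ (univ : Set Y)) = univ := by rw [h]; simp
      have h2 : (1 : ℝ≥0∞) ≤ ENNReal.ofReal δ := by
        have h3 := hKP
        rw [h1] at h3
        simpa [measure_univ] using h3
      have h4 : ENNReal.ofReal δ < 1 := by
        rw [← ENNReal.ofReal_one]
        exact (ENNReal.ofReal_lt_ofReal_iff_of_nonneg hδpos.le).mpr (by linarith)
      exact absurd h2 h4.not_ge
    · exact h
  haveI : Nonempty (↥Kc) := hKcne.to_subtype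
  haveI : CompactSpace (↥Kc) := isCompact_iff_compactSpace.mp hKccomp
  -- countable dense family in C(Kc, ℝ)
  haveI : Nonempty C(↥Kc, ℝ) := ⟨0⟩
  obtain ⟨S, hScount, hSdense⟩ := TopologicalSpace.exists_countable_dense C(↥Kc, ℝ)
  obtain ⟨f, hfS⟩ := hScount.exists_eq_range hSdense.nonempty
  have hfdense : DenseRange f := by rw [DenseRange, ← hfS]; exact hSdense
  -- dense sequence in Kc
  set u : ℕ → ↥Kc := TopologicalSpace.denseSeq (↥Kc) with hudef
  have hu : DenseRange u := TopologicalSpace.denseRange_denseSeq (↥Kc)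
  -- the sets A j
  set A : ℕ → Set Y := fun j => ⋂ i, {y : Y | |η (↑(u i), y) - f j (u i)| ≤ ε'} with hA
  have hAmeas : ∀ j, MeasurableSet (A j) := by
    intro j
    refine MeasurableSet.iInter (fun i => ?_)
    have hm : Measurable fun y => |η (↑(u i), y) - f j (u i)| :=
      ((hηmeas.comp measurable_prodMk_left).sub measurable_const).abs
    exact measurableSet_le hm measurable_const
  have hAprop : ∀ j y, y ∈ A j → ∀ x : ↥Kc, |η (↑x, y) - f j x| ≤ ε' := by
    intro j y hy
    have hclosed : IsClosed {x : ↥Kc | |η (↑x, y) - f j x| ≤ ε'} := by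
      have hc : Continuous fun x : ↥Kc => |η (↑x, y) - f j x| :=
        (((hηcont y).comp continuous_subtype_val).sub (f j).continuous).abs
      exact isClosed_le hc continuous_const
    have hsub : range u ⊆ {x : ↥Kc | |η (↑x, y) - f j x| ≤ ε'} := by
      rintro _ ⟨i, rfl⟩
      exact mem_iInter.mp hy i
    have hall : (univ : Set (↥Kc)) ⊆ {x : ↥Kc | |η (↑x, y) - f j x| ≤ ε'} := by
      rw [← hu.closure_range]
      exact hclosed.closure_subset_iff.mpr hsub
    exact fun x => hall (mem_univ x)
  have hAcover : ∀ y, ∃ j, y ∈ A j := by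
    intro y
    obtain ⟨j, hj⟩ := hfdense.exists_dist_lt
      (⟨fun x : ↥Kc => η (↑x, y), (hηcont y).comp continuous_subtype_val⟩ : C(↥Kc, ℝ)) hε'pos
    refine ⟨j, mem_iInter.mpr fun i => ?_⟩
    show |η (↑(u i), y) - f j (u i)| ≤ ε'
    have h1 : |η (↑(u i), y) - f j (u i)| = dist
        ((⟨fun x : ↥Kc => η (↑x, y), (hηcont y).comp continuous_subtype_val⟩ : C(↥Kc, ℝ)) (u i))
        (f j (u i)) := (Real.dist_eq _ _).symm
    rw [h1]
    exact le_trans (ContinuousMap.dist_apply_le_dist (u i)) hj.le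
  -- disjointify
  set B : ℕ → Set Y := disjointed A with hB
  have hBmeas : ∀ j, MeasurableSet (B j) := MeasurableSet.disjointed hAmeas
  have hBsub : ∀ j, B j ⊆ A j := disjointed_subset A
  have hBdisj : Pairwise (Function.onFun Disjoint B) := disjoint_disjointed A
  have hBcover : (⋃ j, B j) = univ := by
    rw [hB, iUnion_disjointed]
    exact eq_univ_of_forall fun y => mem_iUnion.mpr (hAcover y)
  -- choose J
  set C : ℕ → Set Y := fun J => ⋃ j ∈ Finset.range J, B j with hC
  have hCmeas : ∀ J, MeasurableSet (C J) :=
    fun J => (Finset.range J).measurableSet_biUnion (fun j _ => hBmeas j)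
  have hCmono : Monotone C := by
    intro J J' hJJ' y hy
    rw [hC, mem_iUnion₂] at hy ⊢
    obtain ⟨j, hj, hyj⟩ := hy
    exact ⟨j, Finset.mem_range.mpr (lt_of_lt_of_le (Finset.mem_range.mp hj) hJJ'), hyj⟩
  have hCunion : (⋃ J, C J) = univ := by
    rw [← hBcover]
    ext y
    simp only [hC, mem_iUnion, Finset.mem_range]
    constructor
    · rintro ⟨J, j, hj, hyj⟩; exact ⟨j, hyj⟩
    · rintro ⟨j, hyj⟩; exact ⟨j + 1, j, Nat.lt_succ_self j, hyj⟩
  have hνtend : Tendsto (fun J => ν (C J)) atTop (𝓝 1) := by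
    have h1 := tendsto_measure_iUnion_atTop (μ := ν) hCmono
    rw [hCunion] at h1
    simpa [Function.comp_def] using h1
  obtain ⟨J, hJ⟩ : ∃ J, ν ((C J)ᶜ) ≤ ENNReal.ofReal δ := by
    obtain ⟨J, hJ⟩ := (eventually_gt_of_tendsto_one hνtend
      (ENNReal.ofReal_pos.mpr hδpos)).exists
    exact ⟨J, compl_le_of_lt (hCmeas J) hJ⟩
  -- representatives
  set yj : ℕ → Y := fun j => if h : (B j).Nonempty then h.some else hneY.some with hyjdef
  have hyj : ∀ j, (B j).Nonempty → yj j ∈ B j := by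
    intro j h
    simp only [hyjdef, dif_pos h]
    exact h.some_mem
  -- the simple approximation s
  set s : X × Y → ℝ :=
    fun p => ∑ j ∈ Finset.range J, (B j).indicator (fun _ => (1:ℝ)) p.2 * η (p.1, yj j) with hs
  have hterm_meas : ∀ j, Measurable
      (fun p : X × Y => (B j).indicator (fun _ => (1:ℝ)) p.2 * η (p.1, yj j)) := by
    intro j
    exact ((measurable_const.indicator (hBmeas j)).comp measurable_snd).mul
      ((hηcont (yj j)).measurable.comp measurable_fst)
  have hterm_bdd : ∀ j (p : X × Y),
      |(B j).indicator (fun _ => (1:ℝ)) p.2 * η (p.1, yj j)| ≤ K := by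
    intro j p
    rw [abs_mul]
    have h1 : |(B j).indicator (fun _ => (1:ℝ)) p.2| ≤ 1 := by
      by_cases h : p.2 ∈ B j <;> simp [h]
    calc |(B j).indicator (fun _ => (1:ℝ)) p.2| * |η (p.1, yj j)| ≤ 1 * K :=
        mul_le_mul h1 (hηbd _) (abs_nonneg _) zero_le_one
      _ = K := one_mul K
  have hsmeas : Measurable s := by
    simp only [hs]
    exact Finset.measurable_sum _ (fun j _ => hterm_meas j)
  have hsbdd : ∀ p, |s p| ≤ (J : ℝ) * K := by
    intro p
    simp only [hs]
    refine le_trans (Finset.abs_sum_le_sum_abs _ _) ?_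
    calc ∑ j ∈ Finset.range J, |(B j).indicator (fun _ => (1:ℝ)) p.2 * η (p.1, yj j)|
        ≤ ∑ _j ∈ Finset.range J, K := Finset.sum_le_sum (fun j _ => hterm_bdd j p)
      _ = (J : ℝ) * K := by
          rw [Finset.sum_const, Finset.card_range, nsmul_eq_mul]
  have hηint : ∀ (Q : Measure (X × Y)), IsProbabilityMeasure Q → Integrable η Q := by
    intro Q hQ
    haveI := hQ
    exact int_of_bdd Q hηmeas.aestronglyMeasurable hηbd
  have hsint : ∀ (Q : Measure (X × Y)), IsProbabilityMeasure Q → Integrable s Q := by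
    intro Q hQ
    haveI := hQ
    exact int_of_bdd Q hsmeas.aestronglyMeasurable hsbdd
  -- convergence of the middle term
  have hmid : Tendsto (fun n => ∫ p, s p ∂ Pn n) atTop (𝓝 (∫ p, s p ∂ P)) := by
    have hsplit : ∀ (Q : Measure (X × Y)), IsProbabilityMeasure Q →
        ∫ p, s p ∂ Q = ∑ j ∈ Finset.range J,
          ∫ p : X × Y, (B j).indicator (fun _ => (1:ℝ)) p.2 * η (p.1, yj j) ∂ Q := by
      intro Q hQ
      haveI := hQ
      simp only [hs]
      exact integral_finset_sum _
        (fun j _ => int_of_bdd Q (hterm_meas j).aestronglyMeasurable (hterm_bdd j))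
    have h1 : (fun n => ∫ p, s p ∂ Pn n) = fun n => ∑ j ∈ Finset.range J,
        ∫ p : X × Y, (B j).indicator (fun _ => (1:ℝ)) p.2 * η (p.1, yj j) ∂ Pn n :=
      funext fun n => hsplit (Pn n) (hPn n)
    rw [h1, hsplit P hP]
    exact tendsto_finset_sum _ (fun j _ => aux_prod Pn P hPn hP hconv hmargmeas
      (fun x => η (x, yj j)) (hηcont (yj j)) K hK0 (fun x => hηbd _) (B j) (hBmeas j))
  -- pointwise error bound
  set Kbad : Set (X × Y) := Kcᶜ ×ˢ (univ : Set Y) with hKbaddef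
  have hKbadmeas : MeasurableSet Kbad := (hKcclosed.measurableSet.compl).prod MeasurableSet.univ
  set Ybad : Set Y := (C J)ᶜ with hYbaddef
  have hYbadmeas : MeasurableSet Ybad := (hCmeas J).compl
  have hptbd : ∀ p : X × Y, |η p - s p| ≤ 2 * ε' + Kbad.indicator (fun _ => 2 * (K + 1)) p
      + Ybad.indicator (fun _ => 2 * (K + 1)) p.2 := by
    rintro ⟨x, y⟩
    have hind1 : 0 ≤ Kbad.indicator (fun _ => 2 * (K + 1)) (x, y) :=
      indicator_nonneg (fun _ _ => by linarith) _
    have hind2 : 0 ≤ Ybad.indicator (fun _ => 2 * (K + 1)) y :=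
      indicator_nonneg (fun _ _ => by linarith) _
    by_cases hy : y ∈ C J
    · obtain ⟨j0, hj0J, hj0⟩ : ∃ j0 ∈ Finset.range J, y ∈ B j0 := by
        rw [hC, mem_iUnion₂] at hy
        obtain ⟨j, hjJ, hyj⟩ := hy
        exact ⟨j, hjJ, hyj⟩
      have hsval : s (x, y) = η (x, yj j0) := by
        simp only [hs]
        have h2 := Finset.sum_eq_single_of_mem (s := Finset.range J)
          (f := fun j => (B j).indicator (fun _ => (1:ℝ)) (x, y).2 * η ((x, y).1, yj j)) j0 hj0J
          (fun b _ hbne => by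
            have hnb : (x, y).2 ∉ B b := fun hmem =>
              (hBdisj hbne).le_bot ⟨hmem, hj0⟩
            show (B b).indicator (fun _ => (1:ℝ)) (x, y).2 * η ((x, y).1, yj b) = 0
            rw [indicator_of_notMem hnb, zero_mul])
        have h2' : (∑ j ∈ Finset.range J,
              (B j).indicator (fun _ => (1:ℝ)) (x, y).2 * η ((x, y).1, yj j))
            = (B j0).indicator (fun _ => (1:ℝ)) (x, y).2 * η ((x, y).1, yj j0) := h2
        rw [h2', indicator_of_mem hj0, one_mul]
      have hyA : y ∈ A j0 := hBsub j0 hj0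
      have hyjA : yj j0 ∈ A j0 := hBsub j0 (hyj j0 ⟨y, hj0⟩)
      by_cases hx : x ∈ Kc
      · have h1 := hAprop j0 y hyA ⟨x, hx⟩
        have h2 := hAprop j0 (yj j0) hyjA ⟨x, hx⟩
        have h3 : |η (x, y) - s (x, y)| ≤ 2 * ε' := by
          rw [hsval]
          calc |η (x, y) - η (x, yj j0)|
              ≤ |η (x, y) - f j0 ⟨x, hx⟩| + |f j0 ⟨x, hx⟩ - η (x, yj j0)| := abs_sub_le _ _ _
            _ ≤ ε' + ε' := add_le_add h1 (by rw [abs_sub_comm]; exact h2)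
            _ = 2 * ε' := by ring
        linarith
      · have hpK : (x, y) ∈ Kbad := ⟨hx, mem_univ _⟩
        have h1 : |η (x, y) - s (x, y)| ≤ |η (x, y)| + |s (x, y)| := abs_sub _ _
        have h2 : |s (x, y)| ≤ K := by rw [hsval]; exact hηbd _
        have h3 : Kbad.indicator (fun _ => 2 * (K + 1)) (x, y) = 2 * (K + 1) :=
          indicator_of_mem hpK _
        have h4 := hηbd (x, y)
        rw [h3]
        linarith
    · have hsval : s (x, y) = 0 := by
        simp only [hs]
        apply Finset.sum_eq_zero
        intro j hj
        have hnb : (x, y).2 ∉ B j := fun hmem => hy (by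
          rw [hC, mem_iUnion₂]; exact ⟨j, hj, hmem⟩)
        rw [indicator_of_notMem hnb, zero_mul]
      have h3 : Ybad.indicator (fun _ => 2 * (K + 1)) y = 2 * (K + 1) :=
        indicator_of_mem (by rw [hYbaddef]; exact hy) _
      have h4 := hηbd (x, y)
      rw [hsval, sub_zero, h3]
      linarith
  -- integrated error bound
  have herr : ∀ (Q : Measure (X × Y)), IsProbabilityMeasure Q →
      Q Kbad ≤ ENNReal.ofReal δ → Q.map Prod.snd = ν →
      |(∫ p, η p ∂ Q) - ∫ p, s p ∂ Q| ≤ 2 * ε' + 2 * (K + 1) * δ + 2 * (K + 1) * δ := by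
    intro Q hQ hQbad hQmap
    haveI := hQ
    have hintK : Integrable (fun p : X × Y => Kbad.indicator (fun _ => 2 * (K + 1)) p) Q := by
      refine int_of_bdd Q (measurable_const.indicator hKbadmeas).aestronglyMeasurable
        (C := |2 * (K + 1)|) (fun p => ?_)
      by_cases h : p ∈ Kbad <;> simp [h, le_abs_self, abs_nonneg]
    have hintY : Integrable (fun p : X × Y => Ybad.indicator (fun _ => 2 * (K + 1)) p.2) Q := by
      refine int_of_bdd Q
        ((measurable_const.indicator hYbadmeas).comp measurable_snd).aestronglyMeasurable
        (C := |2 * (K + 1)|) (fun p => ?_)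
      by_cases h : p.2 ∈ Ybad <;> simp [h, le_abs_self, abs_nonneg]
    have hI1 : ∫ p : X × Y, Kbad.indicator (fun _ => 2 * (K + 1)) p ∂ Q
        = (Q Kbad).toReal * (2 * (K + 1)) := by
      rw [integral_indicator_const _ hKbadmeas, smul_eq_mul]; rfl
    have hI2 : ∫ p : X × Y, Ybad.indicator (fun _ => 2 * (K + 1)) p.2 ∂ Q
        = (ν Ybad).toReal * (2 * (K + 1)) := by
      calc ∫ p : X × Y, Ybad.indicator (fun _ => 2 * (K + 1)) p.2 ∂ Q
          = ∫ y, Ybad.indicator (fun _ => 2 * (K + 1)) y ∂ (Q.map Prod.snd) := by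
            rw [integral_map measurable_snd.aemeasurable
              (measurable_const.indicator hYbadmeas).aestronglyMeasurable]
        _ = (ν Ybad).toReal * (2 * (K + 1)) := by
            rw [hQmap, integral_indicator_const _ hYbadmeas, smul_eq_mul]; rfl
    rw [← integral_sub (hηint Q hQ) (hsint Q hQ), ← Real.norm_eq_abs]
    refine le_trans (norm_integral_le_integral_norm _) ?_
    simp_rw [Real.norm_eq_abs]
    have hint3 : Integrable (fun p : X × Y => 2 * ε' + Kbad.indicator (fun _ => 2 * (K + 1)) p
        + Ybad.indicator (fun _ => 2 * (K + 1)) p.2) Q :=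
      ((integrable_const _).add hintK).add hintY
    refine le_trans (integral_mono ((hηint Q hQ).sub (hsint Q hQ)).abs hint3 hptbd) ?_
    rw [integral_add (μ := Q)
        (f := fun p : X × Y => 2 * ε' + Kbad.indicator (fun _ => 2 * (K + 1)) p)
        (g := fun p : X × Y => Ybad.indicator (fun _ => 2 * (K + 1)) p.2)
        ((integrable_const _).add hintK) hintY,
      integral_add (μ := Q) (f := fun _ : X × Y => 2 * ε')
        (g := fun p : X × Y => Kbad.indicator (fun _ => 2 * (K + 1)) p)
        (integrable_const _) hintK, integral_const, hI1, hI2]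
    simp only [measure_univ, probReal_univ, ENNReal.toReal_one, one_smul, smul_eq_mul]
    have hb1 : (Q Kbad).toReal ≤ δ := ENNReal.toReal_le_of_le_ofReal hδpos.le hQbad
    have hb2 : (ν Ybad).toReal ≤ δ := ENNReal.toReal_le_of_le_ofReal hδpos.le hJ
    have hc1 : (Q Kbad).toReal * (2 * (K + 1)) ≤ 2 * (K + 1) * δ := by nlinarith
    have hc2 : (ν Ybad).toReal * (2 * (K + 1)) ≤ 2 * (K + 1) * δ := by nlinarith
    linarith
  -- finish
  obtain ⟨N, hN⟩ := Metric.tendsto_atTop.mp hmid (ε / 4) (by positivity)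
  refine ⟨N, fun n hn => ?_⟩
  have h1 := herr (Pn n) (hPn n) (hKn n) (hmargmeas n)
  have h2 := herr P hP hKP rfl
  have h3 := hN n hn
  rw [Real.dist_eq] at h3 ⊢
  have hbound : 2 * ε' + 2 * (K + 1) * δ + 2 * (K + 1) * δ ≤ ε / 4 := by
    have hε'val : ε' = ε / 16 := hε'def
    nlinarith [hδε]
  set a := ∫ p, η p ∂ Pn n with hadef
  set b := ∫ p, s p ∂ Pn n with hbdef
  set c := ∫ p, s p ∂ P with hcdef
  set e := ∫ p, η p ∂ P with hedef
  have t1 : |a - e| ≤ |a - b| + |b - e| := abs_sub_le a b e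
  have t2 : |b - e| ≤ |b - c| + |c - e| := abs_sub_le b c e
  have t3 : |c - e| = |e - c| := abs_sub_comm c e
  have h1' : |a - b| ≤ ε / 4 := h1.trans hbound
  have h2' : |e - c| ≤ ε / 4 := h2.trans hbound
  calc |a - e| ≤ |a - b| + (|b - c| + |e - c|) := by rw [← t3]; linarith
    _ < ε := by linarith
end MFG
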